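/- For 0 < α < 1 and λ > 0, the total mass of the density w_+(s) = λ (sin(απ)/π) s^{α−1} / (s^{2α} − 2λ s^α cos(απ) + λ²) over (0,∞) equals C = 1/α − 1. -/

import Mathlib

/-!
With θ = απ, the substitution u = s^α turns `wPlus α l` into `1 / θ` times the kernel
`l sin θ / (u² - 2 l u cos θ + l²)`. Completing the square, its antiderivative is
`arctan ((u - l cos θ) / (l sin θ))`, which rises from `θ - π / 2` at `u = 0` to `π / 2`,
so the total mass is `(π - θ) / θ = 1 / α - 1`.
-/

open Real MeasureTheory Filter

noncomputable def wPlus (α l s : ℝ) : ℝ :=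
  l * (Real.sin (α * π) / π) *
    (s ^ (α - 1) / (s ^ (2 * α) - 2 * l * s ^ α * Real.cos (α * π) + l ^ 2))

lemma sq_sub_two_mul_cos_add_sq_eq (l θ u : ℝ) :
    u ^ 2 - 2 * l * u * cos θ + l ^ 2 = (u - l * cos θ) ^ 2 + (l * sin θ) ^ 2 := by
  linear_combination -l ^ 2 * sin_sq_add_cos_sq θ

lemma sq_sub_two_mul_cos_add_sq_pos {l θ : ℝ} (h : l * sin θ ≠ 0) (u : ℝ) :
    0 < u ^ 2 - 2 * l * u * cos θ + l ^ 2 := by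
  rw [sq_sub_two_mul_cos_add_sq_eq]
  positivity

lemma hasDerivAt_arctan_sub_cos_div_sin {l θ : ℝ} (h : l * sin θ ≠ 0) (u : ℝ) :
    HasDerivAt (fun u => arctan ((u - l * cos θ) / (l * sin θ)))
      (l * sin θ / (u ^ 2 - 2 * l * u * cos θ + l ^ 2)) u := by
  have hlin : HasDerivAt (fun u => (u - l * cos θ) / (l * sin θ)) (1 / (l * sin θ)) u := by
    simpa using ((hasDerivAt_id u).sub_const (l * cos θ)).div_const (l * sin θ)
  convert hlin.arctan using 1
  rw [sq_sub_two_mul_cos_add_sq_eq]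
  generalize u - l * cos θ = a at *
  generalize l * sin θ = b at *
  field_simp
  ring

lemma arctan_neg_cos_div_sin {θ : ℝ} (h0 : 0 < θ) (h1 : θ < π) :
    arctan (-cos θ / sin θ) = θ - π / 2 := by
  have htan : -cos θ / sin θ = tan (θ - π / 2) := by
    rw [tan_eq_sin_div_cos, sin_sub_pi_div_two, cos_sub_pi_div_two]
  rw [htan, arctan_tan (by linarith) (by linarith)]

lemma integral_Ioi_sin_div_sq_sub_two_mul_cos_add_sq {l θ : ℝ} (hl : 0 < l)
    (h0 : 0 < θ) (h1 : θ < π) :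
    ∫ u in Set.Ioi (0 : ℝ), l * sin θ / (u ^ 2 - 2 * l * u * cos θ + l ^ 2) = π - θ := by
  have hls : 0 < l * sin θ := mul_pos hl (sin_pos_of_pos_of_lt_pi h0 h1)
  have hderiv := hasDerivAt_arctan_sub_cos_div_sin hls.ne'
  have hlim : Tendsto (fun u => arctan ((u - l * cos θ) / (l * sin θ))) atTop (nhds (π / 2)) :=
    (tendsto_arctan_atTop.mono_right nhdsWithin_le_nhds).comp
      ((tendsto_atTop_add_const_right _ _ tendsto_id).atTop_div_const hls)
  rw [integral_Ioi_of_hasDerivAt_of_nonneg (hderiv 0).continuousAt.continuousWithinAt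
    (fun u _ => hderiv u)
    (fun u _ => (div_pos hls (sq_sub_two_mul_cos_add_sq_pos hls.ne' u)).le) hlim]
  have hval : (0 - l * cos θ) / (l * sin θ) = -cos θ / sin θ := by
    rw [zero_sub, mul_comm l, mul_comm l, neg_div, neg_div, mul_div_mul_right _ _ hl.ne']
  rw [hval, arctan_neg_cos_div_sin h0 h1]
  ring

lemma wPlus_eq_rpow_smul_comp_rpow {α l x : ℝ} (hα : α ≠ 0) (hx : 0 < x) :
    wPlus α l x = (α * x ^ (α - 1)) • ((1 / (α * π)) *
      (l * sin (α * π) / ((x ^ α) ^ 2 - 2 * l * x ^ α * cos (α * π) + l ^ 2))) := by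
  rw [wPlus, smul_eq_mul, mul_comm 2 α, rpow_mul hx.le, rpow_two]
  field_simp

theorem wPlus_total_mass {α l : ℝ} (hα : 0 < α) (hα1 : α < 1) (hl : 0 < l) :
    ∫ s in Set.Ioi (0 : ℝ), wPlus α l s = 1 / α - 1 := by
  have hθ0 : 0 < α * π := mul_pos hα pi_pos
  have hθπ : α * π < π := mul_lt_of_lt_one_left pi_pos hα1
  let g : ℝ → ℝ := fun u =>
    (1 / (α * π)) * (l * sin (α * π) / (u ^ 2 - 2 * l * u * cos (α * π) + l ^ 2))
  calc ∫ s in Set.Ioi (0 : ℝ), wPlus α l s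
      = ∫ x in Set.Ioi (0 : ℝ), (α * x ^ (α - 1)) • g (x ^ α) :=
        setIntegral_congr_fun measurableSet_Ioi
          (fun x hx => wPlus_eq_rpow_smul_comp_rpow hα.ne' hx)
    _ = ∫ u in Set.Ioi (0 : ℝ), g u := integral_comp_rpow_Ioi_of_pos hα
    _ = 1 / (α * π) * (π - α * π) := by
        rw [integral_const_mul, integral_Ioi_sin_div_sq_sub_two_mul_cos_add_sq hl hθ0 hθπ]
    _ = 1 / α - 1 := by field_simp
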